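/- arXiv:0906.1732 — 3 statements merged into one kernel-verified Lean document; each statement's English description precedes it below -/
import Mathlib

section
/- Single total derivative, higher order: for a commuting family of derivations, d_μ d_Λ(g)·f is equal modulo total divergences to (-1)^{|Λ|+1} g · d_Λ d_μ(f); consequently, if Σ_{Λ} Δ^{Λ} d_Λ(E) = 0 is a Noether identity with coefficients Δ^Λ ∈ A (finite sum over multi-indices Λ), then the element u·E with u = Σ_Λ (-1)^{|Λ|} d_Λ(c·Δ^Λ) for any c ∈ A is a total divergence: u·E ∈ Σ_μ d_μ(A). -/
/-- The composition `d_Λ = d_{λ₁} ∘ ⋯ ∘ d_{λ_k}` of derivations along a multi-index. -/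
def dComp {R A : Type*} [CommRing R] [CommRing A] [Algebra R A] {n : ℕ}
    (d : Fin n → Derivation R A A) (Λ : List (Fin n)) : A → A :=
  Λ.foldr (fun i f => ⇑(d i) ∘ f) id

lemma dComp_cons {R A : Type*} [CommRing R] [CommRing A] [Algebra R A] {n : ℕ}
    (d : Fin n → Derivation R A A) (i : Fin n) (Λ : List (Fin n)) (f : A) :
    dComp d (i :: Λ) f = d i (dComp d Λ f) := rfl

lemma dComp_comm {R A : Type*} [CommRing R] [CommRing A] [Algebra R A] {n : ℕ}
    (d : Fin n → Derivation R A A)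
    (hcomm : ∀ μ ν, ∀ a : A, d μ (d ν a) = d ν (d μ a))
    (Λ : List (Fin n)) (i : Fin n) (f : A) :
    dComp d Λ (d i f) = d i (dComp d Λ f) := by
  induction Λ with
  | nil => rfl
  | cons j L ih => rw [dComp_cons, dComp_cons, ih, hcomm]

/-- If `∑_Λ Δ^Λ d_Λ(E) = 0` is a Noether identity, then for any `c` the element
`u·E` with `u = ∑_Λ (−1)^{|Λ|} d_Λ(c·Δ^Λ)` is a total divergence. -/
theorem noether_identity_gives_total_divergence
    {R A : Type*} [CommRing R] [CommRing A] [Algebra R A] {n : ℕ}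
    (d : Fin n → Derivation R A A)
    (hcomm : ∀ μ ν, ∀ a : A, d μ (d ν a) = d ν (d μ a))
    (E : A) (Δs : Finset (List (Fin n))) (Δ : List (Fin n) → A)
    (hNoether : ∑ Λ ∈ Δs, Δ Λ * dComp d Λ E = 0)
    (c : A) (u : A)
    (hu : u = ∑ Λ ∈ Δs, ((-1 : A) ^ Λ.length) * dComp d Λ (c * Δ Λ)) :
    u * E ∈ ⨆ μ, LinearMap.range (d μ).toLinearMap := by
  set S := ⨆ μ, LinearMap.range (d μ).toLinearMap with hS
  have hdmem : ∀ (i : Fin n) (y : A), d i y ∈ S :=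
    fun i y => Submodule.mem_iSup_of_mem i ⟨y, rfl⟩
  have hdmem' : ∀ (k : ℕ) (i : Fin n) (y : A), (-1 : A) ^ k * d i y ∈ S := by
    intro k i y
    rcases Nat.even_or_odd k with h | h
    · rw [h.neg_one_pow, one_mul]; exact hdmem i y
    · rw [h.neg_one_pow, neg_one_mul]; exact S.neg_mem (hdmem i y)
  have key : ∀ (Λ : List (Fin n)) (g f : A),
      (-1 : A) ^ Λ.length * dComp d Λ g * f - g * dComp d Λ f ∈ S := by
    intro Λ
    induction Λ with
    | nil => intro g f; simp [dComp]
    | cons i L ih =>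
      intro g f
      have h1 : (-1 : A) ^ (i :: L).length * dComp d (i :: L) g * f
          - g * dComp d (i :: L) f
          = (-1 : A) ^ (L.length + 1) * d i (dComp d L g * f)
            + ((-1 : A) ^ L.length * dComp d L g * (d i f) - g * dComp d L (d i f)) := by
        rw [dComp_cons, dComp_cons, Derivation.leibniz, dComp_comm d hcomm]
        simp only [smul_eq_mul, List.length_cons]
        ring
      rw [h1]
      exact S.add_mem (hdmem' _ i _) (ih g (d i f))
  have hzero : ∑ Λ ∈ Δs, (c * Δ Λ) * dComp d Λ E = 0 := by
    calc ∑ Λ ∈ Δs, (c * Δ Λ) * dComp d Λ E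
        = c * ∑ Λ ∈ Δs, Δ Λ * dComp d Λ E := by rw [Finset.mul_sum]; exact Finset.sum_congr rfl fun i _ => by ring
      _ = 0 := by rw [hNoether, mul_zero]
  have huE : u * E = ∑ Λ ∈ Δs,
      ((-1 : A) ^ Λ.length * dComp d Λ (c * Δ Λ) * E - (c * Δ Λ) * dComp d Λ E) := by
    rw [Finset.sum_sub_distrib, hzero, sub_zero, hu, Finset.sum_mul]
  rw [huE]
  exact S.sum_mem fun Λ _ => key Λ (c * Δ Λ) E
end

section
/- Closed chain of symmetrization identities forces on-shell vanishing: suppose arrays J_k ∈ A (k=1,...,M) with indices (μ_k...μ_M) satisfy J^{(μ₁μ₂)...μ_M} = 0 and, for 1 ≤ k < M, J^{(μ_k μ_{k+1})...μ_M} + Σ_ν d_ν J^{ν μ_k...μ_M} ∈ I for an ideal I stable under the commuting derivations d_ν. Then Σ_ν d_ν J^{(νμ)μ_{k}...μ_M} ∈ I for every k, i.e. every symmetrized divergence term lies in the on-shell ideal. -/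
/-- Closed chain of symmetrization identities forces on-shell vanishing: given arrays
`J k` (tails encoded as lists of indices of length `M − k`), if the symmetrization of
`J 1` in its first two indices vanishes and each
`J (k+1)^{(μ_k μ_{k+1})...} + ∑_ν d_ν J k^{ν μ_k ...} ∈ I` for `1 ≤ k < M`, then every
symmetrized divergence `∑_ν d_ν J k^{(ν μ)...}` lies in the on-shell ideal `I`. -/
theorem chain_of_symmetrization_identities {K A : Type*} [Field K] [CharZero K]
    [CommRing A] [Algebra K A] {n M : ℕ}
    (d : Fin n → Derivation K A A)
    (hcomm : ∀ μ ν, ∀ a : A, d μ (d ν a) = d ν (d μ a))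
    (I : Ideal A) (hI : ∀ ν, ∀ x ∈ I, d ν x ∈ I)
    (J : ℕ → Fin n → Fin n → List (Fin n) → A)
    (ha : ∀ μ ν : Fin n, ∀ tail : List (Fin n), tail.length = M - 1 →
      (2 : K)⁻¹ • (J 1 μ ν tail + J 1 ν μ tail) = 0)
    (hb : ∀ k : ℕ, 1 ≤ k → k < M →
      ∀ a b : Fin n, ∀ tail : List (Fin n), tail.length = M - k - 1 →
        (2 : K)⁻¹ • (J (k + 1) a b tail + J (k + 1) b a tail)
          + ∑ ν, d ν (J k ν a (b :: tail)) ∈ I) :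
    ∀ k : ℕ, 1 ≤ k → k ≤ M →
      ∀ μ : Fin n, ∀ tail : List (Fin n), tail.length = M - k →
        ∑ ν, d ν ((2 : K)⁻¹ • (J k ν μ tail + J k μ ν tail)) ∈ I := by
  intro k hk1
  induction k, hk1 using Nat.le_induction with
  | base =>
    intro _ μ tail htail
    have h0 : ∀ ν : Fin n, ((2 : K)⁻¹ • (J 1 ν μ tail + J 1 μ ν tail)) = 0 :=
      fun ν => ha ν μ tail htail
    simp [h0]
  | succ k hk ih =>
    intro hkM μ tail htail
    have hkM' : k < M := by omega
    have htail' : tail.length = M - k - 1 := by omega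
    set t : List (Fin n) := μ :: tail with ht
    have h1 : ∑ ν, d ν ((2 : K)⁻¹ • (J (k + 1) ν μ tail + J (k + 1) μ ν tail)
        + ∑ σ, d σ (J k σ ν t)) ∈ I := by
      refine Ideal.sum_mem _ fun ν _ => hI ν _ ?_
      exact hb k hk hkM' ν μ tail htail'
    set L : A := ∑ ν, ∑ σ, d ν (d σ (J k σ ν t)) with hL
    have h2 : L ∈ I := by
      have key : (∑ σ, d σ (∑ ν, d ν ((2 : K)⁻¹ • (J k ν σ t + J k σ ν t)))) = L := by
        have e1 : (∑ σ, d σ (∑ ν, d ν ((2 : K)⁻¹ • (J k ν σ t + J k σ ν t))))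
            = (2 : K)⁻¹ • ((∑ σ, ∑ ν, d σ (d ν (J k ν σ t)))
              + ∑ σ, ∑ ν, d σ (d ν (J k σ ν t))) := by
          simp [map_sum, smul_add, Finset.smul_sum, Finset.sum_add_distrib]
        have hB : (∑ σ, ∑ ν, d σ (d ν (J k σ ν t))) = L := by
          rw [Finset.sum_comm]
          exact Finset.sum_congr rfl fun ν _ => Finset.sum_congr rfl fun σ _ => hcomm σ ν _
        have hA : (∑ σ, ∑ ν, d σ (d ν (J k ν σ t))) = L := rfl
        rw [e1, hA, hB, ← two_smul K L, smul_smul,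
          inv_mul_cancel₀ (two_ne_zero : (2 : K) ≠ 0), one_smul]
      rw [← key]
      refine Ideal.sum_mem _ fun σ _ => hI σ _ ?_
      refine ih (by omega) σ t ?_
      simp [ht]
      omega
    have h3 : (∑ ν, d ν (∑ σ, d σ (J k σ ν t))) ∈ I := by
      have : (∑ ν, d ν (∑ σ, d σ (J k σ ν t))) = L := by
        simp [hL, map_sum]
      rwa [this]
    have h4 := Ideal.sub_mem I h1 h3
    have heq : (∑ ν, d ν ((2 : K)⁻¹ • (J (k + 1) ν μ tail + J (k + 1) μ ν tail)
        + ∑ σ, d σ (J k σ ν t))) - (∑ ν, d ν (∑ σ, d σ (J k σ ν t)))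
        = ∑ ν, d ν ((2 : K)⁻¹ • (J (k + 1) ν μ tail + J (k + 1) μ ν tail)) := by
      simp [map_add, Finset.sum_add_distrib]
    rwa [heq] at h4
end

section
/- In the polynomial de Rham complex over ℝ in n variables, a polynomial (n−1)-form with polynomial coefficients whose exterior derivative vanishes is exact; equivalently, if J : Fin n → ℝ[x_1,...,x_n] satisfies Σ_μ ∂_μ J^μ = 0, then there exists an antisymmetric array U^{νμ} of polynomials with J^μ = Σ_ν ∂_ν U^{νμ} for n ≥ 2. -/
open MvPolynomial

noncomputable def psiAux {n : ℕ} (c : ℝ) : MvPolynomial (Fin n) ℝ →+ MvPolynomial (Fin n) ℝ where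
  toFun p := (AddMonoidAlgebra.coeff p).sum fun s a => monomial s (a / (c + s.degree))
  map_zero' := by
    exact Finsupp.sum_zero_index
  map_add' p q := by
    exact Finsupp.sum_add_index' (fun s => by rw [zero_div, map_zero])
      (fun s a b => by rw [add_div, map_add])

lemma psiAux_monomial {n : ℕ} (c : ℝ) (s : Fin n →₀ ℕ) (a : ℝ) :
    psiAux c (monomial s a) = monomial s (a / (c + s.degree)) := by
  simp only [psiAux, AddMonoidHom.coe_mk, ZeroHom.coe_mk]
  exact sum_monomial_eq (b := fun s a => monomial s (a / (c + s.degree))) (by rw [zero_div, map_zero])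

lemma degree_eq_sum {n : ℕ} (t : Fin n →₀ ℕ) : t.degree = ∑ i, t i := by
  rw [Finsupp.degree]
  exact Finset.sum_subset (Finset.subset_univ _)
    (fun i _ hi => Finsupp.notMem_support_iff.mp hi)

lemma degree_sub_single {n : ℕ} (s : Fin n →₀ ℕ) (ν : Fin n) (h : 1 ≤ s ν) :
    (s - Finsupp.single ν 1).degree = s.degree - 1 := by
  have h1 : Finsupp.single ν 1 ≤ s := by
    rwa [Finsupp.single_le_iff]
  have h2 : (s - Finsupp.single ν 1) + Finsupp.single ν 1 = s := tsub_add_cancel_of_le h1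
  have h3 := congrArg Finsupp.degree h2
  rw [degree_eq_sum, degree_eq_sum] at h3
  simp only [Finsupp.add_apply, Finset.sum_add_distrib] at h3
  have h4 : ∑ i, Finsupp.single ν 1 i = 1 := by
    simp [Finsupp.single_apply]
  rw [h4, ← degree_eq_sum, ← degree_eq_sum] at h3
  omega

lemma pderiv_psiAux {n : ℕ} (c : ℝ) (ν : Fin n) (p : MvPolynomial (Fin n) ℝ) :
    pderiv ν (psiAux c p) = psiAux (c + 1) (pderiv ν p) := by
  induction p using MvPolynomial.induction_on' with
  | monomial s a =>
    rw [psiAux_monomial, pderiv_monomial, pderiv_monomial, psiAux_monomial]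
    rcases Nat.eq_zero_or_pos (s ν) with h | h
    · simp [h]
    · rw [degree_sub_single s ν h]
      congr 1
      have hd : 1 ≤ s.degree := le_trans h (Finsupp.le_degree ν s)
      have hc : ((s.degree - 1 : ℕ) : ℝ) = (s.degree : ℝ) - 1 := by
        push_cast [hd]; ring
      rw [hc]
      ring
  | add p q hp hq =>
    rw [map_add, map_add, map_add, map_add, hp, hq]

lemma X_mul_pderiv_monomial {n : ℕ} (ν : Fin n) (s : Fin n →₀ ℕ) (a : ℝ) :
    X ν * pderiv ν (monomial s a) = monomial s (a * s ν) := by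
  rw [pderiv_monomial]
  rcases Nat.eq_zero_or_pos (s ν) with h | h
  · simp [h]
  · have h1 : Finsupp.single ν 1 ≤ s := by rwa [Finsupp.single_le_iff]
    rw [X, monomial_mul, one_mul, add_tsub_cancel_of_le h1]

lemma euler_psiAux {n : ℕ} (hn : 2 ≤ n) (p : MvPolynomial (Fin n) ℝ) :
    n • psiAux ((n : ℝ) - 1) p + ∑ ν, X ν * pderiv ν (psiAux ((n : ℝ) - 1) p)
      = psiAux ((n : ℝ) - 1) p + p := by
  induction p using MvPolynomial.induction_on' with
  | monomial s a =>
    rw [psiAux_monomial]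
    have hsum : ∑ ν, X ν * pderiv ν (monomial s (a / ((n : ℝ) - 1 + s.degree)))
        = monomial s (a / ((n : ℝ) - 1 + s.degree) * s.degree) := by
      rw [Finset.sum_congr rfl (fun ν _ => X_mul_pderiv_monomial ν s _)]
      rw [← map_sum, ← Finset.mul_sum]
      congr 1
      rw [degree_eq_sum]
      push_cast
      ring
    rw [hsum, ← map_nsmul, ← map_add, ← map_add]
    congr 1
    have hpos : (0 : ℝ) < (n : ℝ) - 1 + s.degree := by
      have : (2 : ℝ) ≤ (n : ℝ) := by exact_mod_cast hn
      have : (0 : ℝ) ≤ (s.degree : ℝ) := Nat.cast_nonneg _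
      linarith
    have hne : ((n : ℝ) - 1 + s.degree) ≠ 0 := ne_of_gt hpos
    rw [nsmul_eq_mul]
    field_simp
    ring
  | add p q hp hq =>
    simp only [map_add, smul_add, mul_add, Finset.sum_add_distrib]
    rw [add_add_add_comm, hp, hq]
    ring

/-- Algebraic Poincaré lemma at form degree `n − 1`: a divergence-free polynomial
current is the divergence of an antisymmetric superpotential (`n ≥ 2`). -/
theorem divergence_free_polynomial_current_is_superpotential {n : ℕ} (hn : 2 ≤ n)
    (J : Fin n → MvPolynomial (Fin n) ℝ)
    (hJ : ∑ μ, MvPolynomial.pderiv μ (J μ) = 0) :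
    ∃ U : Fin n → Fin n → MvPolynomial (Fin n) ℝ,
      (∀ ν μ, U ν μ = - U μ ν) ∧
      ∀ μ, J μ = ∑ ν, MvPolynomial.pderiv ν (U ν μ) := by
  set Q : Fin n → MvPolynomial (Fin n) ℝ := fun μ => psiAux ((n : ℝ) - 1) (J μ) with hQ
  refine ⟨fun ν μ => X ν * Q μ - X μ * Q ν, fun ν μ => by ring, fun μ => ?_⟩
  have hexp : ∀ ν, pderiv ν (X ν * Q μ - X μ * Q ν)
      = Q μ + X ν * pderiv ν (Q μ) - (pderiv ν (X μ) * Q ν + X μ * pderiv ν (Q ν)) := by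
    intro ν
    rw [map_sub, pderiv_mul, pderiv_mul, pderiv_X_self, one_mul]
  rw [Finset.sum_congr rfl (fun ν _ => hexp ν)]
  rw [Finset.sum_sub_distrib, Finset.sum_add_distrib, Finset.sum_add_distrib]
  have h1 : ∑ _ν : Fin n, Q μ = n • Q μ := by
    rw [Finset.sum_const, Finset.card_univ, Fintype.card_fin]
  have h2 : ∑ ν, pderiv ν (X μ) * Q ν = Q μ := by
    rw [Finset.sum_eq_single μ]
    · rw [pderiv_X_self, one_mul]
    · intro ν _ hne
      rw [pderiv_X_of_ne (Ne.symm hne), zero_mul]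
    · intro h; exact absurd (Finset.mem_univ μ) h
  have h3 : ∑ ν, X μ * pderiv ν (Q ν) = 0 := by
    rw [← Finset.mul_sum]
    have : ∑ ν, pderiv ν (Q ν) = 0 := by
      have := Finset.sum_congr rfl
        (fun ν (_ : ν ∈ Finset.univ) => pderiv_psiAux ((n : ℝ) - 1) ν (J ν))
      rw [this, ← map_sum, hJ, map_zero]
    rw [this, mul_zero]
  rw [h1, h2, h3]
  have heuler := euler_psiAux hn (J μ)
  have hQμ : Q μ = psiAux ((n : ℝ) - 1) (J μ) := rfl
  rw [hQμ, heuler]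
  ring
end
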